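/- arXiv:1304.7870 — 5 statements merged into one kernel-verified Lean document; each statement's English description precedes it below -/
import Mathlib

section
/- Let w be a permutation, r maximal with w(r) > w(r+1), and s > r maximal with w(s) < w(r). Suppose w' = w·t_{rs}·t_{rj} satisfies ℓ(w') = ℓ(w), where j < r. Then the Rothe diagram of w' is obtained from that of w by the two James-Peel moves: D(w') = R_{r→j} C_{w(s)→w(j)} D(w), and moreover these two moves commute on D(w). -/
/-- The Rothe diagram of a permutation of `ℕ`, as a set of cells. -/
def RotheN (w : Equiv.Perm ℕ) : Set (ℕ × ℕ) :=
  {c | ∃ j : ℕ, c.1 < j ∧ w j < w c.1 ∧ c.2 = w j}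

/-- Coxeter length, i.e. the number of inversions. -/
noncomputable def lenN (w : Equiv.Perm ℕ) : ℕ :=
  {p : ℕ × ℕ | p.1 < p.2 ∧ w p.2 < w p.1}.ncard

/-- The James-Peel row move `R_{a→b}`: cells in row `a` move to row `b` when the target
position is empty. -/
def Rmove (a b : ℕ) (D : Set (ℕ × ℕ)) : Set (ℕ × ℕ) :=
  {c | (c.1 ≠ a ∧ c.1 ≠ b ∧ c ∈ D) ∨
       (c.1 = b ∧ ((a, c.2) ∈ D ∨ (b, c.2) ∈ D)) ∨
       (c.1 = a ∧ (a, c.2) ∈ D ∧ (b, c.2) ∈ D)}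

/-- The James-Peel column move `C_{c→d}`. -/
def Cmove (a b : ℕ) (D : Set (ℕ × ℕ)) : Set (ℕ × ℕ) :=
  {c | (c.2 ≠ a ∧ c.2 ≠ b ∧ c ∈ D) ∨
       (c.2 = b ∧ ((c.1, a) ∈ D ∨ (c.1, b) ∈ D)) ∨
       (c.2 = a ∧ (c.1, a) ∈ D ∧ (c.1, b) ∈ D)}

/-- indicator of an inversion -/
def indN (u : Equiv.Perm ℕ) (x y : ℕ) : ℕ := if x < y ∧ u y < u x then 1 else 0

private lemma ite_and_kill (P : Prop) [Decidable P] (h : ¬ P) (Q : Prop) [Decidable Q] :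
    (if P ∧ Q then (1:ℕ) else 0) = 0 := by simp [h]

private lemma ite_and_keep (P : Prop) [Decidable P] (h : P) (Q : Prop) [Decidable Q] :
    (if P ∧ Q then (1:ℕ) else 0) = if Q then 1 else 0 := by simp [h]

private lemma maps_lt (u : Equiv.Perm ℕ) (n : ℕ) (hfix : ∀ i, n ≤ i → u i = i) {x : ℕ}
    (hx : x < n) : u x < n := by
  by_contra h
  push_neg at h
  have h2 : u (u x) = u x := hfix _ h
  have h3 := u.injective h2
  omega

private lemma lenN_eq_sum (u : Equiv.Perm ℕ) (n : ℕ) (hfix : ∀ i, n ≤ i → u i = i) :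
    lenN u = ∑ x ∈ Finset.range n, ∑ y ∈ Finset.range n, indN u x y := by
  classical
  have hset : {p : ℕ × ℕ | p.1 < p.2 ∧ u p.2 < u p.1}
      = ↑((Finset.range n ×ˢ Finset.range n).filter (fun p => p.1 < p.2 ∧ u p.2 < u p.1)) := by
    ext ⟨x, y⟩
    simp only [Set.mem_setOf_eq, Finset.coe_filter, Finset.mem_product, Finset.mem_range]
    constructor
    · rintro ⟨h1, h2⟩
      refine ⟨⟨?_, ?_⟩, h1, h2⟩
      · by_contra hx
        push_neg at hx
        have hux : u x = x := hfix _ hx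
        rcases lt_or_ge y n with hy | hy
        · have := maps_lt u n hfix hy; omega
        · have : u y = y := hfix _ hy; omega
      · by_contra hy
        push_neg at hy
        have huy : u y = y := hfix _ hy
        rcases lt_or_ge x n with hx | hx
        · have := maps_lt u n hfix hx; omega
        · have : u x = x := hfix _ hx; omega
    · tauto
  rw [lenN, hset, Set.ncard_coe_finset, Finset.card_filter, Finset.sum_product]
  rfl

private lemma incr_after (w : Equiv.Perm ℕ) (r : ℕ) (hrmax : ∀ i, r < i → ¬ w (i + 1) < w i) :
    ∀ x y, r < x → x < y → w x < w y := by
  have key : ∀ x, r < x → ∀ d, w x < w (x + d + 1) := by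
    intro x hx d
    induction d with
    | zero =>
      have h := hrmax x hx
      have hne : w x ≠ w (x + 1) := fun h' => by have := w.injective h'; omega
      simpa using by omega
    | succ d ih =>
      have h := hrmax (x + d + 1) (by omega)
      have hne : w (x + d + 1) ≠ w (x + d + 1 + 1) := fun h' => by have := w.injective h'; omega
      have e : x + (d + 1) + 1 = x + d + 1 + 1 := by omega
      rw [e]
      omega
  intro x y hx hxy
  have h := key x hx (y - x - 1)
  have e : x + (y - x - 1) + 1 = y := by omega
  rwa [e] at h

private lemma memRotheN (u : Equiv.Perm ℕ) (x c : ℕ) :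
    ((x, c) ∈ RotheN u) ↔ x < u.symm c ∧ c < u x := by
  constructor
  · rintro ⟨k, h1, h2, h3⟩
    simp only at h1 h2 h3
    subst h3
    simpa using ⟨h1, h2⟩
  · rintro ⟨h1, h2⟩
    exact ⟨u.symm c, h1, by simpa using h2, (u.apply_symm_apply c).symm⟩

private lemma sum_split (n j r s : ℕ) (hj : j < r) (hrs : r < s) (hsn : s < n) (F : ℕ → ℕ → ℕ) :
    (∑ x ∈ Finset.range n, ∑ y ∈ Finset.range n, F x y)
      = (∑ x ∈ Finset.range n \ {j, r, s}, ∑ y ∈ Finset.range n \ {j, r, s}, F x y)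
        + ((∑ t ∈ Finset.range n \ {j, r, s},
              (F t j + F t r + F t s + (F j t + F r t + F s t)))
          + (F j j + F j r + F j s + (F r j + F r r + F r s) + (F s j + F s r + F s s))) := by
  classical
  have hsub : ({j, r, s} : Finset ℕ) ⊆ Finset.range n := by
    intro t ht
    simp only [Finset.mem_insert, Finset.mem_singleton] at ht
    simp only [Finset.mem_range]
    omega
  have hsum3 : ∀ g : ℕ → ℕ, ∑ t ∈ ({j, r, s} : Finset ℕ), g t = g j + g r + g s := by
    intro g
    rw [Finset.sum_insert (by simp only [Finset.mem_insert, Finset.mem_singleton]; omega),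
      Finset.sum_insert (by simp only [Finset.mem_singleton]; omega), Finset.sum_singleton,
      add_assoc]
  have h1 : ∀ g : ℕ → ℕ, ∑ x ∈ Finset.range n, g x
      = ∑ x ∈ Finset.range n \ {j, r, s}, g x + (g j + g r + g s) := by
    intro g
    rw [← hsum3 g, Finset.sum_sdiff hsub]
  rw [h1 (fun x => ∑ y ∈ Finset.range n, F x y)]
  have h2 : ∀ x, ∑ y ∈ Finset.range n, F x y
      = ∑ y ∈ Finset.range n \ {j, r, s}, F x y + (F x j + F x r + F x s) := fun x => h1 (F x)
  simp only [h2, Finset.sum_add_distrib]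
  ring

set_option maxHeartbeats 3000000 in
/-- Let `w` be a permutation of `{0, …, n-1}`, `r` maximal with `w r > w (r+1)`, `s > r`
maximal with `w s < w r`, and suppose `w' = w t_{rs} t_{rj}` (with `j < r`) has the same
length as `w`.  Then `D(w') = R_{r→j} C_{w s → w j} D(w)`, and the two James-Peel moves
commute on `D(w)`. -/
theorem stmt5 (n : ℕ) (w : Equiv.Perm ℕ) (r s j : ℕ)
    (hfix : ∀ i, n ≤ i → w i = i)
    (hdesc : w (r + 1) < w r)
    (hrmax : ∀ i, r < i → ¬ w (i + 1) < w i)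
    (hrs : r < s) (hws : w s < w r)
    (hsmax : ∀ i, s < i → ¬ w i < w r)
    (hj : j < r)
    (hlen : lenN (w * Equiv.swap r s * Equiv.swap r j) = lenN w) :
    RotheN (w * Equiv.swap r s * Equiv.swap r j)
        = Rmove r j (Cmove (w s) (w j) (RotheN w)) ∧
      Rmove r j (Cmove (w s) (w j) (RotheN w))
        = Cmove (w s) (w j) (Rmove r j (RotheN w)) := by
  classical
  set u := w * Equiv.swap r s * Equiv.swap r j with hu
  have huval : ∀ x, u x = w (Equiv.swap r s (Equiv.swap r j x)) := fun x => rfl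
  have hneq_jr : j ≠ r := by omega
  have hneq_js : j ≠ s := by omega
  have hneq_rs : r ≠ s := by omega
  have hujv : u j = w s := by
    rw [huval j, Equiv.swap_apply_right, Equiv.swap_apply_left]
  have hurv : u r = w j := by
    rw [huval r, Equiv.swap_apply_left, Equiv.swap_apply_of_ne_of_ne hneq_jr hneq_js]
  have husv : u s = w r := by
    rw [huval s, Equiv.swap_apply_of_ne_of_ne (Ne.symm hneq_rs) (Ne.symm hneq_js),
      Equiv.swap_apply_right]
  have huov : ∀ x, x ≠ j → x ≠ r → x ≠ s → u x = w x := by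
    intro x h1 h2 h3
    rw [huval x, Equiv.swap_apply_of_ne_of_ne h2 h1, Equiv.swap_apply_of_ne_of_ne h2 h3]
  have husa : u.symm (w j) = r := by rw [Equiv.symm_apply_eq, hurv]
  have husb : u.symm (w s) = j := by rw [Equiv.symm_apply_eq, hujv]
  have husp : u.symm (w r) = s := by rw [Equiv.symm_apply_eq, husv]
  have huso : ∀ c, c ≠ w j → c ≠ w s → c ≠ w r → u.symm c = w.symm c := by
    intro c h1 h2 h3
    rw [Equiv.symm_apply_eq, huov]
    · exact (w.apply_symm_apply c).symm
    · exact fun h => h1 (by rw [← w.apply_symm_apply c, h])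
    · exact fun h => h3 (by rw [← w.apply_symm_apply c, h])
    · exact fun h => h2 (by rw [← w.apply_symm_apply c, h])
  -- basic bounds
  have hrn : r < n := by
    by_contra h
    push_neg at h
    have h1 := hfix r h
    have h2 := hfix (r + 1) (by omega)
    omega
  have hltn : ∀ x, x < n → w x < n := fun x hx => maps_lt w n hfix hx
  have hsn : s < n := by
    by_contra h
    push_neg at h
    have h1 := hfix s h
    have h2 := hltn r hrn
    omega
  have hmono : ∀ x y, r < x → x < y → w x < w y := incr_after w r hrmax
  have hsmax' : ∀ t, s < t → w r < w t := by
    intro t ht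
    have h1 := hsmax t ht
    have h2 : w t ≠ w r := fun h => by have := w.injective h; omega
    omega
  -- Part A : extract a < b and the gap property from the length hypothesis
  have hufix : ∀ i, n ≤ i → u i = i := by
    intro i hi
    rw [huov i (by omega) (by omega) (by omega), hfix i hi]
  have hLw := lenN_eq_sum w n hfix
  have hLu := lenN_eq_sum u n hufix
  have hEw := sum_split n j r s hj hrs hsn (indN w)
  have hEu := sum_split n j r s hj hrs hsn (indN u)
  have hfar : (∑ x ∈ Finset.range n \ {j, r, s}, ∑ y ∈ Finset.range n \ {j, r, s}, indN u x y)
      = ∑ x ∈ Finset.range n \ {j, r, s}, ∑ y ∈ Finset.range n \ {j, r, s}, indN w x y := by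
    apply Finset.sum_congr rfl
    intro x hx
    apply Finset.sum_congr rfl
    intro y hy
    simp only [Finset.mem_sdiff, Finset.mem_range, Finset.mem_insert,
      Finset.mem_singleton] at hx hy
    push_neg at hx hy
    rw [indN, indN, huov x hx.2.1 hx.2.2.1 hx.2.2.2, huov y hy.2.1 hy.2.2.1 hy.2.2.2]
  have hG : ∀ t ∈ Finset.range n \ ({j, r, s} : Finset ℕ),
      (indN u t j + indN u t r + indN u t s + (indN u j t + indN u r t + indN u s t))
        + 2 * (if j < t ∧ t < r ∧ w s < w t ∧ w t < w j then 1 else 0)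
      = (indN w t j + indN w t r + indN w t s + (indN w j t + indN w r t + indN w s t))
        + 2 * (if j < t ∧ t < r ∧ w j < w t ∧ w t < w s then 1 else 0) := by
    intro t ht
    simp only [Finset.mem_sdiff, Finset.mem_range, Finset.mem_insert,
      Finset.mem_singleton] at ht
    push_neg at ht
    obtain ⟨htn, htj, htr, hts⟩ : t < n ∧ t ≠ j ∧ t ≠ r ∧ t ≠ s :=
      ⟨ht.1, ht.2.1, ht.2.2.1, ht.2.2.2⟩
    have e1 : w t ≠ w j := fun h => htj (w.injective h)
    have e2 : w t ≠ w r := fun h => htr (w.injective h)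
    have e3 : w t ≠ w s := fun h => hts (w.injective h)
    have hm1 : r < t → t < s → w t < w s := fun h1 h2 => hmono t s h1 h2
    have hm2 : s < t → w r < w t := hsmax' t
    simp only [indN]
    rw [huov t htj htr hts, hujv, hurv, husv]
    rcases lt_trichotomy t j with h | h | h
    · simp only [ite_and_keep (t < j) (by omega), ite_and_keep (t < r) (by omega),
        ite_and_keep (t < s) (by omega), ite_and_kill (j < t) (by omega),
        ite_and_kill (r < t) (by omega), ite_and_kill (s < t) (by omega)]
      split_ifs <;> omega
    · omega
    · rcases lt_trichotomy t r with h' | h' | h'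
      · simp only [ite_and_kill (t < j) (by omega), ite_and_keep (t < r) (by omega),
          ite_and_keep (t < s) (by omega), ite_and_keep (j < t) (by omega),
          ite_and_kill (r < t) (by omega), ite_and_kill (s < t) (by omega)]
        split_ifs <;> omega
      · omega
      · rcases lt_trichotomy t s with h'' | h'' | h''
        · simp only [ite_and_kill (t < j) (by omega), ite_and_kill (t < r) (by omega),
            ite_and_keep (t < s) (by omega), ite_and_keep (j < t) (by omega),
            ite_and_keep (r < t) (by omega), ite_and_kill (s < t) (by omega)]
          split_ifs <;> omega
        · omega
        · simp only [ite_and_kill (t < j) (by omega), ite_and_kill (t < r) (by omega),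
            ite_and_kill (t < s) (by omega), ite_and_keep (j < t) (by omega),
            ite_and_keep (r < t) (by omega), ite_and_keep (s < t) (by omega)]
          split_ifs <;> omega
  have hcross : (∑ t ∈ Finset.range n \ {j, r, s},
        (indN u t j + indN u t r + indN u t s + (indN u j t + indN u r t + indN u s t)))
        + 2 * (∑ t ∈ Finset.range n \ {j, r, s},
            (if j < t ∧ t < r ∧ w s < w t ∧ w t < w j then 1 else 0))
      = (∑ t ∈ Finset.range n \ {j, r, s},
        (indN w t j + indN w t r + indN w t s + (indN w j t + indN w r t + indN w s t)))
        + 2 * (∑ t ∈ Finset.range n \ {j, r, s},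
            (if j < t ∧ t < r ∧ w j < w t ∧ w t < w s then 1 else 0)) := by
    rw [Finset.mul_sum, Finset.mul_sum, ← Finset.sum_add_distrib, ← Finset.sum_add_distrib]
    exact Finset.sum_congr rfl hG
  have hH : (indN u j j + indN u j r + indN u j s + (indN u r j + indN u r r + indN u r s)
        + (indN u s j + indN u s r + indN u s s)) + 2 * (if w s < w j then 1 else 0)
      = indN w j j + indN w j r + indN w j s + (indN w r j + indN w r r + indN w r s)
        + (indN w s j + indN w s r + indN w s s) := by
    have e1 : w j ≠ w s := fun h => hneq_js (w.injective h)
    have e2 : w j ≠ w r := fun h => hneq_jr (w.injective h)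
    simp only [indN]
    rw [hujv, hurv, husv]
    simp only [ite_and_kill (j < j) (by omega), ite_and_keep (j < r) (by omega),
      ite_and_keep (j < s) (by omega), ite_and_kill (r < j) (by omega),
      ite_and_kill (r < r) (by omega), ite_and_keep (r < s) (by omega),
      ite_and_kill (s < j) (by omega), ite_and_kill (s < r) (by omega),
      ite_and_kill (s < s) (by omega)]
    split_ifs <;> omega
  have hkey : 2 * (∑ t ∈ Finset.range n \ {j, r, s},
          (if j < t ∧ t < r ∧ w s < w t ∧ w t < w j then 1 else 0))
        + 2 * (if w s < w j then 1 else 0)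
      = 2 * ∑ t ∈ Finset.range n \ {j, r, s},
          (if j < t ∧ t < r ∧ w j < w t ∧ w t < w s then 1 else 0) := by
    have e1 : lenN u = lenN w := hlen
    rw [hLu, hLw, hEu, hEw] at e1
    omega
  have hab : w j < w s := by
    rcases lt_trichotomy (w j) (w s) with h | h | h
    · exact h
    · exact absurd (w.injective h) hneq_js
    · exfalso
      have hCab0 : (∑ t ∈ Finset.range n \ {j, r, s},
          (if j < t ∧ t < r ∧ w j < w t ∧ w t < w s then 1 else 0)) = 0 :=
        Finset.sum_eq_zero fun t _ => if_neg (by omega)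
      have h2 : (if w s < w j then (1:ℕ) else 0) = 1 := if_pos h
      omega
  have hgap : ∀ t, j < t → t < r → ¬ (w j < w t ∧ w t < w s) := by
    intro t h1 h2 hc
    have hCba0 : (∑ t ∈ Finset.range n \ {j, r, s},
        (if j < t ∧ t < r ∧ w s < w t ∧ w t < w j then 1 else 0)) = 0 :=
      Finset.sum_eq_zero fun t _ => if_neg (by omega)
    have h2' : (if w s < w j then (1:ℕ) else 0) = 0 := if_neg (by omega)
    have hCab0 : (∑ t ∈ Finset.range n \ {j, r, s},
        (if j < t ∧ t < r ∧ w j < w t ∧ w t < w s then 1 else 0)) = 0 := by omega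
    have hmem : t ∈ Finset.range n \ ({j, r, s} : Finset ℕ) := by
      simp only [Finset.mem_sdiff, Finset.mem_range, Finset.mem_insert, Finset.mem_singleton]
      omega
    have h0 := (Finset.sum_eq_zero_iff.mp hCab0) t hmem
    rw [if_pos ⟨h1, h2, hc.1, hc.2⟩] at h0
    exact one_ne_zero h0
  -- Part B : the diagram identities
  have main : ∀ x c : ℕ,
      (((x, c) ∈ RotheN u) ↔ ((x, c) ∈ Rmove r j (Cmove (w s) (w j) (RotheN w)))) ∧
      (((x, c) ∈ Rmove r j (Cmove (w s) (w j) (RotheN w))) ↔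
        ((x, c) ∈ Cmove (w s) (w j) (Rmove r j (RotheN w)))) := by
    clear hG hfar hcross hH hkey hEw hEu hLw hLu hufix hlen hu huval hfix hdesc hrmax hsmax
      hltn hrn hsn
    have hneq_rj : r ≠ j := Ne.symm hneq_jr
    have hneq_sj : s ≠ j := Ne.symm hneq_js
    have hneq_sr : s ≠ r := Ne.symm hneq_rs
    have vab : w j ≠ w s := Nat.ne_of_lt hab
    have vba : w s ≠ w j := Nat.ne_of_lt' hab
    have vbp : w s ≠ w r := Nat.ne_of_lt hws
    have vpb : w r ≠ w s := Nat.ne_of_lt' hws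
    have vap : w j ≠ w r := Nat.ne_of_lt (lt_trans hab hws)
    have vpa : w r ≠ w j := Nat.ne_of_lt' (lt_trans hab hws)
    have n1 : ∀ t, r < t → t < s → w t < w s := fun t h1 h2 => hmono t s h1 h2
    have n2 : ∀ t, s < t → w r < w t := hsmax'
    have n3 : ∀ d, r < w.symm d → w.symm d < s → d < w s := by
      intro d h1 h2
      have h := hmono _ s h1 h2
      rwa [w.apply_symm_apply] at h
    have n4 : ∀ d, s < w.symm d → w r < d := by
      intro d h
      have h' := hsmax' _ h
      rwa [w.apply_symm_apply] at h'
    have n6 : ∀ t, j < t → t < r → ¬ (w j < w t ∧ w t < w s) := hgap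
    have n7 : ∀ d, j < w.symm d → w.symm d < r → ¬ (w j < d ∧ d < w s) := by
      intro d h1 h2
      have h := hgap _ h1 h2
      rwa [w.apply_symm_apply] at h
    intro x c
    simp only [Rmove, Cmove, Set.mem_setOf_eq, memRotheN, Equiv.symm_apply_apply]
    have i1 := n1 x
    have i2 := n2 x
    have i3 := n3 c
    have i4 := n4 c
    have i6 := n6 x
    have i7 := n7 c
    clear n1 n2 n3 n4 n6 n7
    rcases eq_or_ne x j with hex | hxj
    · rw [hex]
      clear i1 i2 i6
      rcases eq_or_ne c (w j) with hec | hca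
      · rw [hec]
        clear i3 i4 i7
        simp only [husa, hujv, Equiv.symm_apply_apply, ne_eq, lt_self_iff_false, not_true_eq_false, not_false_eq_true, true_and, and_true,
          false_and, and_false, or_false, false_or, not_true, true_or, or_true, iff_true, iff_false, false_iff,
          true_iff, eq_self_iff_true, hneq_jr, hneq_js, hneq_rs, hneq_rj, hneq_sj, hneq_sr,
          vab, vba, vap, vpa, vbp, vpb] <;>
        (clear vab vba vbp vpb vap vpa hneq_rj hneq_sj hneq_sr hneq_jr hneq_js hneq_rs; omega)
      · rcases eq_or_ne c (w s) with hec | hcb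
        · rw [hec]
          clear i3 i4 i7
          simp only [husb, hujv, Equiv.symm_apply_apply, ne_eq, lt_self_iff_false, not_true_eq_false, not_false_eq_true, true_and, and_true,
          false_and, and_false, or_false, false_or, not_true, true_or, or_true, iff_true, iff_false, false_iff,
          true_iff, eq_self_iff_true, hneq_jr, hneq_js, hneq_rs, hneq_rj, hneq_sj, hneq_sr,
          vab, vba, vap, vpa, vbp, vpb] <;>
        (clear vab vba vbp vpb vap vpa hneq_rj hneq_sj hneq_sr hneq_jr hneq_js hneq_rs; omega)
        · rcases eq_or_ne c (w r) with hec | hcp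
          · rw [hec]
            clear i3 i4 i7
            simp only [husp, hujv, Equiv.symm_apply_apply, ne_eq, lt_self_iff_false, not_true_eq_false, not_false_eq_true, true_and, and_true,
          false_and, and_false, or_false, false_or, not_true, true_or, or_true, iff_true, iff_false, false_iff,
          true_iff, eq_self_iff_true, hneq_jr, hneq_js, hneq_rs, hneq_rj, hneq_sj, hneq_sr,
          vab, vba, vap, vpa, vbp, vpb] <;>
        (clear vab vba vbp vpb vap vpa hneq_rj hneq_sj hneq_sr hneq_jr hneq_js hneq_rs; omega)
          · have scj : w.symm c ≠ j := fun h => hca (by rw [← w.apply_symm_apply c, h])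
            have scb : w.symm c ≠ s := fun h => hcb (by rw [← w.apply_symm_apply c, h])
            have scp : w.symm c ≠ r := fun h => hcp (by rw [← w.apply_symm_apply c, h])
            simp only [huso c hca hcb hcp, hujv, hca, hcb, hcp, scj, scb, scp, ne_eq, lt_self_iff_false, not_true_eq_false, not_false_eq_true, true_and, and_true,
          false_and, and_false, or_false, false_or, not_true, true_or, or_true, iff_true, iff_false, false_iff,
          true_iff, eq_self_iff_true, hneq_jr, hneq_js, hneq_rs, hneq_rj, hneq_sj, hneq_sr,
          vab, vba, vap, vpa, vbp, vpb] <;>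
        (clear vab vba vbp vpb vap vpa hneq_rj hneq_sj hneq_sr hneq_jr hneq_js hneq_rs; omega)
    · rcases eq_or_ne x r with hex | hxr
      · rw [hex]
        clear i1 i2 i6
        rcases eq_or_ne c (w j) with hec | hca
        · rw [hec]
          clear i3 i4 i7
          simp only [husa, hurv, Equiv.symm_apply_apply, ne_eq, lt_self_iff_false, not_true_eq_false, not_false_eq_true, true_and, and_true,
          false_and, and_false, or_false, false_or, not_true, true_or, or_true, iff_true, iff_false, false_iff,
          true_iff, eq_self_iff_true, hneq_jr, hneq_js, hneq_rs, hneq_rj, hneq_sj, hneq_sr,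
          vab, vba, vap, vpa, vbp, vpb] <;>
        (clear vab vba vbp vpb vap vpa hneq_rj hneq_sj hneq_sr hneq_jr hneq_js hneq_rs; omega)
        · rcases eq_or_ne c (w s) with hec | hcb
          · rw [hec]
            clear i3 i4 i7
            simp only [husb, hurv, Equiv.symm_apply_apply, ne_eq, lt_self_iff_false, not_true_eq_false, not_false_eq_true, true_and, and_true,
          false_and, and_false, or_false, false_or, not_true, true_or, or_true, iff_true, iff_false, false_iff,
          true_iff, eq_self_iff_true, hneq_jr, hneq_js, hneq_rs, hneq_rj, hneq_sj, hneq_sr,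
          vab, vba, vap, vpa, vbp, vpb] <;>
        (clear vab vba vbp vpb vap vpa hneq_rj hneq_sj hneq_sr hneq_jr hneq_js hneq_rs; omega)
          · rcases eq_or_ne c (w r) with hec | hcp
            · rw [hec]
              clear i3 i4 i7
              simp only [husp, hurv, Equiv.symm_apply_apply, ne_eq, lt_self_iff_false, not_true_eq_false, not_false_eq_true, true_and, and_true,
          false_and, and_false, or_false, false_or, not_true, true_or, or_true, iff_true, iff_false, false_iff,
          true_iff, eq_self_iff_true, hneq_jr, hneq_js, hneq_rs, hneq_rj, hneq_sj, hneq_sr,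
          vab, vba, vap, vpa, vbp, vpb] <;>
        (clear vab vba vbp vpb vap vpa hneq_rj hneq_sj hneq_sr hneq_jr hneq_js hneq_rs; omega)
            · have scj : w.symm c ≠ j := fun h => hca (by rw [← w.apply_symm_apply c, h])
              have scb : w.symm c ≠ s := fun h => hcb (by rw [← w.apply_symm_apply c, h])
              have scp : w.symm c ≠ r := fun h => hcp (by rw [← w.apply_symm_apply c, h])
              simp only [huso c hca hcb hcp, hurv, hca, hcb, hcp, scj, scb, scp, ne_eq, lt_self_iff_false, not_true_eq_false, not_false_eq_true, true_and, and_true,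
          false_and, and_false, or_false, false_or, not_true, true_or, or_true, iff_true, iff_false, false_iff,
          true_iff, eq_self_iff_true, hneq_jr, hneq_js, hneq_rs, hneq_rj, hneq_sj, hneq_sr,
          vab, vba, vap, vpa, vbp, vpb] <;>
        (clear vab vba vbp vpb vap vpa hneq_rj hneq_sj hneq_sr hneq_jr hneq_js hneq_rs; omega)
      · rcases eq_or_ne x s with hex | hxs
        · rw [hex]
          clear i1 i2 i6
          rcases eq_or_ne c (w j) with hec | hca
          · rw [hec]
            clear i3 i4 i7
            simp only [husa, husv, Equiv.symm_apply_apply, ne_eq, lt_self_iff_false, not_true_eq_false, not_false_eq_true, true_and, and_true,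
          false_and, and_false, or_false, false_or, not_true, true_or, or_true, iff_true, iff_false, false_iff,
          true_iff, eq_self_iff_true, hneq_jr, hneq_js, hneq_rs, hneq_rj, hneq_sj, hneq_sr,
          vab, vba, vap, vpa, vbp, vpb] <;>
        (clear vab vba vbp vpb vap vpa hneq_rj hneq_sj hneq_sr hneq_jr hneq_js hneq_rs; omega)
          · rcases eq_or_ne c (w s) with hec | hcb
            · rw [hec]
              clear i3 i4 i7
              simp only [husb, husv, Equiv.symm_apply_apply, ne_eq, lt_self_iff_false, not_true_eq_false, not_false_eq_true, true_and, and_true,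
          false_and, and_false, or_false, false_or, not_true, true_or, or_true, iff_true, iff_false, false_iff,
          true_iff, eq_self_iff_true, hneq_jr, hneq_js, hneq_rs, hneq_rj, hneq_sj, hneq_sr,
          vab, vba, vap, vpa, vbp, vpb] <;>
        (clear vab vba vbp vpb vap vpa hneq_rj hneq_sj hneq_sr hneq_jr hneq_js hneq_rs; omega)
            · rcases eq_or_ne c (w r) with hec | hcp
              · rw [hec]
                clear i3 i4 i7
                simp only [husp, husv, Equiv.symm_apply_apply, ne_eq, lt_self_iff_false, not_true_eq_false, not_false_eq_true, true_and, and_true,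
          false_and, and_false, or_false, false_or, not_true, true_or, or_true, iff_true, iff_false, false_iff,
          true_iff, eq_self_iff_true, hneq_jr, hneq_js, hneq_rs, hneq_rj, hneq_sj, hneq_sr,
          vab, vba, vap, vpa, vbp, vpb] <;>
        (clear vab vba vbp vpb vap vpa hneq_rj hneq_sj hneq_sr hneq_jr hneq_js hneq_rs; omega)
              · have scj : w.symm c ≠ j := fun h => hca (by rw [← w.apply_symm_apply c, h])
                have scb : w.symm c ≠ s := fun h => hcb (by rw [← w.apply_symm_apply c, h])
                have scp : w.symm c ≠ r := fun h => hcp (by rw [← w.apply_symm_apply c, h])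
                simp only [huso c hca hcb hcp, husv, hca, hcb, hcp, scj, scb, scp, ne_eq, lt_self_iff_false, not_true_eq_false, not_false_eq_true, true_and, and_true,
          false_and, and_false, or_false, false_or, not_true, true_or, or_true, iff_true, iff_false, false_iff,
          true_iff, eq_self_iff_true, hneq_jr, hneq_js, hneq_rs, hneq_rj, hneq_sj, hneq_sr,
          vab, vba, vap, vpa, vbp, vpb] <;>
        (clear vab vba vbp vpb vap vpa hneq_rj hneq_sj hneq_sr hneq_jr hneq_js hneq_rs; omega)
        · have exj : w x ≠ w j := fun h => hxj (w.injective h)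
          have exr : w x ≠ w r := fun h => hxr (w.injective h)
          have exs : w x ≠ w s := fun h => hxs (w.injective h)
          rcases eq_or_ne c (w j) with hec | hca
          · rw [hec]
            clear i3 i4 i7
            simp only [husa, huov x hxj hxr hxs, Equiv.symm_apply_apply, ne_eq, lt_self_iff_false, not_true_eq_false, not_false_eq_true, true_and, and_true,
          false_and, and_false, or_false, false_or, not_true, true_or, or_true, iff_true, iff_false, false_iff,
          true_iff, eq_self_iff_true, hneq_jr, hneq_js, hneq_rs, hneq_rj, hneq_sj, hneq_sr,
          vab, vba, vap, vpa, vbp, vpb] <;>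
        (clear vab vba vbp vpb vap vpa hneq_rj hneq_sj hneq_sr hneq_jr hneq_js hneq_rs; omega)
          · rcases eq_or_ne c (w s) with hec | hcb
            · rw [hec]
              clear i3 i4 i7
              simp only [husb, huov x hxj hxr hxs, Equiv.symm_apply_apply, ne_eq, lt_self_iff_false, not_true_eq_false, not_false_eq_true, true_and, and_true,
          false_and, and_false, or_false, false_or, not_true, true_or, or_true, iff_true, iff_false, false_iff,
          true_iff, eq_self_iff_true, hneq_jr, hneq_js, hneq_rs, hneq_rj, hneq_sj, hneq_sr,
          vab, vba, vap, vpa, vbp, vpb] <;>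
        (clear vab vba vbp vpb vap vpa hneq_rj hneq_sj hneq_sr hneq_jr hneq_js hneq_rs; omega)
            · rcases eq_or_ne c (w r) with hec | hcp
              · rw [hec]
                clear i3 i4 i7
                simp only [husp, huov x hxj hxr hxs, Equiv.symm_apply_apply, ne_eq, lt_self_iff_false, not_true_eq_false, not_false_eq_true, true_and, and_true,
          false_and, and_false, or_false, false_or, not_true, true_or, or_true, iff_true, iff_false, false_iff,
          true_iff, eq_self_iff_true, hneq_jr, hneq_js, hneq_rs, hneq_rj, hneq_sj, hneq_sr,
          vab, vba, vap, vpa, vbp, vpb] <;>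
        (clear vab vba vbp vpb vap vpa hneq_rj hneq_sj hneq_sr hneq_jr hneq_js hneq_rs; omega)
              · have scj : w.symm c ≠ j := fun h => hca (by rw [← w.apply_symm_apply c, h])
                have scb : w.symm c ≠ s := fun h => hcb (by rw [← w.apply_symm_apply c, h])
                have scp : w.symm c ≠ r := fun h => hcp (by rw [← w.apply_symm_apply c, h])
                simp only [huso c hca hcb hcp, huov x hxj hxr hxs, hca, hcb, hcp, scj, scb, scp, ne_eq, lt_self_iff_false, not_true_eq_false, not_false_eq_true, true_and, and_true,
          false_and, and_false, or_false, false_or, not_true, true_or, or_true, iff_true, iff_false, false_iff,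
          true_iff, eq_self_iff_true, hneq_jr, hneq_js, hneq_rs, hneq_rj, hneq_sj, hneq_sr,
          vab, vba, vap, vpa, vbp, vpb] <;>
        (clear vab vba vbp vpb vap vpa hneq_rj hneq_sj hneq_sr hneq_jr hneq_js hneq_rs; omega)
  constructor
  · ext ⟨x, c⟩
    exact (main x c).1
  · ext ⟨x, c⟩
    exact (main x c).2
end

section
/- With notation as in the transition recurrence: for a permutation w, r maximal with w(r) > w(r+1), s > r maximal with w(s) < w(r), the element w·t_{rs}·t_{rj} (for j < r) has the same length as w if and only if w(j) < w(s) and there is no j' with j < j' < r and w(j) < w(j') < w(s). -/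
open Finset Equiv

def invT (n : ℕ) : Finset (ℕ × ℕ) :=
  (Finset.range n ×ˢ Finset.range n).filter fun p => p.1 < p.2

lemma mem_invT {n : ℕ} {p : ℕ × ℕ} : p ∈ invT n ↔ p.1 < n ∧ p.2 < n ∧ p.1 < p.2 := by
  simp [invT, and_assoc]

lemma fix_lt {u : Equiv.Perm ℕ} {n : ℕ} (hfix : ∀ i, n ≤ i → u i = i) {i : ℕ}
    (hi : i < n) : u i < n := by
  by_contra h
  push_neg at h
  have h2 := hfix _ h
  have : u i = i := u.injective h2
  omega

lemma lenN_eq_sum_s6 (n : ℕ) (u : Equiv.Perm ℕ) (hfix : ∀ i, n ≤ i → u i = i) :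
    lenN u = ∑ p ∈ invT n, (if u p.2 < u p.1 then 1 else 0) := by
  have h1 : {p : ℕ × ℕ | p.1 < p.2 ∧ u p.2 < u p.1}
      = ↑((invT n).filter fun p => u p.2 < u p.1) := by
    ext p
    simp only [Set.mem_setOf_eq, coe_filter, mem_invT, Set.mem_setOf_eq]
    constructor
    · rintro ⟨h12, hinv⟩
      have h2n : p.2 < n := by
        by_contra h
        push_neg at h
        have e2 : u p.2 = p.2 := hfix _ h
        rcases lt_or_ge p.1 n with h1n | h1n
        · have := fix_lt hfix h1n
          omega
        · have e1 : u p.1 = p.1 := hfix _ h1n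
          omega
      have h1n : p.1 < n := lt_trans h12 h2n
      exact ⟨⟨h1n, h2n, h12⟩, hinv⟩
    · rintro ⟨⟨_, _, h12⟩, hinv⟩
      exact ⟨h12, hinv⟩
  rw [lenN, h1, Set.ncard_coe_finset, Finset.card_filter]

lemma rev_iff {a b : ℕ} (hab : a < b) {i j : ℕ} (hij : i < j) :
    Equiv.swap a b j < Equiv.swap a b i ↔ (i = a ∧ j ≤ b) ∨ (a ≤ i ∧ j = b) := by
  simp only [Equiv.swap_apply_def]
  split_ifs <;> omega

section
variable (a b : ℕ)

/-- sorted image of a pair under swap a b -/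
def sig (p : ℕ × ℕ) : ℕ × ℕ :=
  if Equiv.swap a b p.1 < Equiv.swap a b p.2 then (Equiv.swap a b p.1, Equiv.swap a b p.2)
  else (Equiv.swap a b p.2, Equiv.swap a b p.1)

lemma swap_lt_n {n : ℕ} (han : a < n) (hbn : b < n) {x : ℕ} (hx : x < n) :
    Equiv.swap a b x < n := by
  simp only [Equiv.swap_apply_def]
  split_ifs <;> omega

lemma sig_mem {n : ℕ} (han : a < n) (hbn : b < n) {p : ℕ × ℕ} (hp : p ∈ invT n) :
    sig a b p ∈ invT n := by
  rw [mem_invT] at hp ⊢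
  obtain ⟨h1, h2, h12⟩ := hp
  have hne : Equiv.swap a b p.1 ≠ Equiv.swap a b p.2 :=
    fun h => absurd ((Equiv.swap a b).injective h) (by omega)
  unfold sig
  split_ifs with h
  · exact ⟨swap_lt_n a b han hbn h1, swap_lt_n a b han hbn h2, h⟩
  · exact ⟨swap_lt_n a b han hbn h2, swap_lt_n a b han hbn h1, by omega⟩

lemma sig_invol {p : ℕ × ℕ} (hp : p.1 < p.2) : sig a b (sig a b p) = p := by
  unfold sig
  have hne : Equiv.swap a b p.1 ≠ Equiv.swap a b p.2 :=
    fun h => absurd ((Equiv.swap a b).injective h) (by omega)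
  split_ifs with h <;>
    simp_all [Equiv.swap_apply_self, Prod.ext_iff] <;> omega

end

lemma key (n : ℕ) (u : Equiv.Perm ℕ) (a b : ℕ) (hfix : ∀ i, n ≤ i → u i = i)
    (hab : a < b) (hbn : b < n) (hv : u a < u b) :
    lenN (u * Equiv.swap a b) = lenN u + 1 +
      2 * ((Finset.Ioo a b).filter fun k => u a < u k ∧ u k < u b).card := by
  have han : a < n := lt_trans hab hbn
  set u' := u * Equiv.swap a b with hu'
  have hu'app : ∀ x, u' x = u (Equiv.swap a b x) := fun x => rfl
  have hfix' : ∀ i, n ≤ i → u' i = i := by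
    intro i hi
    rw [hu'app, Equiv.swap_apply_of_ne_of_ne (by omega) (by omega), hfix i hi]
  set T := invT n with hT
  set F : Equiv.Perm ℕ → ℕ × ℕ → ℕ := fun v p => if v p.2 < v p.1 then 1 else 0 with hF
  have hl' : lenN u' = ∑ p ∈ T, F u' p := lenN_eq_sum_s6 n u' hfix'
  have hl : lenN u = ∑ p ∈ T, F u p := lenN_eq_sum_s6 n u hfix
  -- reindex
  have hre : ∑ p ∈ T, F u' p = ∑ p ∈ T, F u' (sig a b p) := by
    refine (Finset.sum_nbij' (sig a b) (sig a b) ?_ ?_ ?_ ?_ ?_).symm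
    · exact fun p hp => sig_mem a b han hbn hp
    · exact fun p hp => sig_mem a b han hbn hp
    · exact fun p hp => sig_invol a b (mem_invT.mp hp).2.2
    · exact fun p hp => sig_invol a b (mem_invT.mp hp).2.2
    · exact fun p hp => rfl
  -- pointwise
  have hpt : ∀ p ∈ T, F u' (sig a b p) + F u p =
      if Equiv.swap a b p.2 < Equiv.swap a b p.1 then 1 else 2 * F u p := by
    intro p hp
    obtain ⟨h1, h2, h12⟩ := mem_invT.mp hp
    have hne : Equiv.swap a b p.1 ≠ Equiv.swap a b p.2 :=
      fun h => absurd ((Equiv.swap a b).injective h) (by omega)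
    have hune : u p.1 ≠ u p.2 := fun h => absurd (u.injective h) (by omega)
    by_cases hrev : Equiv.swap a b p.2 < Equiv.swap a b p.1
    · rw [if_pos hrev]
      have : sig a b p = (Equiv.swap a b p.2, Equiv.swap a b p.1) := by
        unfold sig; rw [if_neg (by omega)]
      rw [this]
      simp only [hF, hu'app, Equiv.swap_apply_self]
      split_ifs <;> omega
    · rw [if_neg hrev]
      have : sig a b p = (Equiv.swap a b p.1, Equiv.swap a b p.2) := by
        unfold sig; rw [if_pos (by omega)]
      rw [this]
      simp only [hF, hu'app, Equiv.swap_apply_self]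
      split_ifs <;> omega
  set R := T.filter (fun p => Equiv.swap a b p.2 < Equiv.swap a b p.1) with hRdef
  -- main identity: lenN u' + 2 * ∑_R F u = R.card + lenN u
  have hsplit : ∑ p ∈ T, F u p
      = ∑ p ∈ R, F u p + ∑ p ∈ T.filter (fun p => ¬ Equiv.swap a b p.2 < Equiv.swap a b p.1), F u p :=
    (Finset.sum_filter_add_sum_filter_not T _ _).symm
  have hmain : lenN u' + 2 * ∑ p ∈ R, F u p = R.card + lenN u := by
    have h1 : lenN u' + lenN u = ∑ p ∈ T, (if Equiv.swap a b p.2 < Equiv.swap a b p.1 then 1 else 2 * F u p) := by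
      rw [hl', hre, hl, ← Finset.sum_add_distrib]
      exact Finset.sum_congr rfl hpt
    have h2 : ∑ p ∈ T, (if Equiv.swap a b p.2 < Equiv.swap a b p.1 then 1 else 2 * F u p)
        = ∑ p ∈ R, 1 + ∑ p ∈ T.filter (fun p => ¬ Equiv.swap a b p.2 < Equiv.swap a b p.1), 2 * F u p := by
      rw [← Finset.sum_filter_add_sum_filter_not T (fun p => Equiv.swap a b p.2 < Equiv.swap a b p.1)]
      congr 1
      · exact Finset.sum_congr rfl (fun p hp => if_pos (Finset.mem_filter.mp hp).2)
      · exact Finset.sum_congr rfl (fun p hp => if_neg (Finset.mem_filter.mp hp).2)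
    rw [Finset.sum_const, smul_eq_mul, mul_one, ← Finset.mul_sum] at h2
    have h3 := hl
    omega
  -- describe R
  have hR : R = (((Finset.Ioo a b).image fun k => ((a, k) : ℕ × ℕ)) ∪
      ((Finset.Ioo a b).image fun k => ((k, b) : ℕ × ℕ))) ∪ {((a, b) : ℕ × ℕ)} := by
    ext p
    simp only [hRdef, hT, Finset.mem_filter, mem_invT, Finset.mem_union, Finset.mem_image,
      Finset.mem_Ioo, Finset.mem_singleton, Prod.ext_iff]
    constructor
    · rintro ⟨⟨h1, h2, h12⟩, hrev⟩
      rw [rev_iff hab h12] at hrev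
      rcases hrev with ⟨rfl, hle⟩ | ⟨hge, rfl⟩
      · by_cases hb : p.2 = b
        · right; exact ⟨rfl, hb⟩
        · left; left; exact ⟨p.2, ⟨h12, by omega⟩, rfl, rfl⟩
      · by_cases ha : p.1 = a
        · right; exact ⟨ha, rfl⟩
        · left; right; exact ⟨p.1, ⟨by omega, h12⟩, rfl, rfl⟩
    · rintro ((⟨k, ⟨hk1, hk2⟩, h1, h2⟩ | ⟨k, ⟨hk1, hk2⟩, h1, h2⟩) | ⟨h1, h2⟩) <;>
      · refine ⟨⟨by omega, by omega, by omega⟩, ?_⟩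
        rw [rev_iff hab (by omega)]
        omega
  have hinj1 : Function.Injective (fun k => ((a, k) : ℕ × ℕ)) := by
    intro x y h; simpa using congrArg Prod.snd h
  have hinj2 : Function.Injective (fun k => ((k, b) : ℕ × ℕ)) := by
    intro x y h; simpa using congrArg Prod.fst h
  have hd1 : Disjoint ((Finset.Ioo a b).image fun k => ((a, k) : ℕ × ℕ))
      ((Finset.Ioo a b).image fun k => ((k, b) : ℕ × ℕ)) := by
    rw [Finset.disjoint_left]
    rintro ⟨x, y⟩ hx hy
    simp only [Finset.mem_image, Finset.mem_Ioo, Prod.ext_iff] at hx hy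
    obtain ⟨k, hk, e1, e2⟩ := hx
    obtain ⟨k', hk', e1', e2'⟩ := hy
    omega
  have hd2 : Disjoint (((Finset.Ioo a b).image fun k => ((a, k) : ℕ × ℕ)) ∪
      ((Finset.Ioo a b).image fun k => ((k, b) : ℕ × ℕ))) {((a, b) : ℕ × ℕ)} := by
    rw [Finset.disjoint_right]
    rintro ⟨x, y⟩ hx hy
    simp only [Finset.mem_singleton, Prod.ext_iff] at hx
    simp only [Finset.mem_union, Finset.mem_image, Finset.mem_Ioo, Prod.ext_iff] at hy
    rcases hy with ⟨k, hk, e1, e2⟩ | ⟨k, hk, e1, e2⟩ <;> omega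
  set m := (Finset.Ioo a b).card with hm
  have hRcard : R.card = m + m + 1 := by
    rw [hR, Finset.card_union_of_disjoint hd2, Finset.card_union_of_disjoint hd1,
      Finset.card_image_of_injective _ hinj1, Finset.card_image_of_injective _ hinj2,
      Finset.card_singleton]
  have hRsum : ∑ p ∈ R, F u p =
      ∑ k ∈ Finset.Ioo a b, (if u k < u a then 1 else 0) +
      ∑ k ∈ Finset.Ioo a b, (if u b < u k then 1 else 0) := by
    rw [hR, Finset.sum_union hd2, Finset.sum_union hd1,
      Finset.sum_image (fun x _ y _ h => hinj1 h), Finset.sum_image (fun x _ y _ h => hinj2 h),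
      Finset.sum_singleton]
    simp only [hF]
    rw [if_neg (by omega)]
    omega
  set c := ((Finset.Ioo a b).filter fun k => u a < u k ∧ u k < u b).card with hc
  have hcount : ∑ k ∈ Finset.Ioo a b, (if u k < u a then 1 else 0) +
      ∑ k ∈ Finset.Ioo a b, (if u b < u k then 1 else 0) + c = m := by
    rw [hc, Finset.card_filter, ← Finset.sum_add_distrib, ← Finset.sum_add_distrib]
    have : ∀ k ∈ Finset.Ioo a b,
        ((if u k < u a then 1 else 0) + (if u b < u k then 1 else 0) +
          (if u a < u k ∧ u k < u b then 1 else 0)) = 1 := by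
      intro k hk
      rw [Finset.mem_Ioo] at hk
      have h1 : u k ≠ u a := fun h => absurd (u.injective h) (by omega)
      have h2 : u k ≠ u b := fun h => absurd (u.injective h) (by omega)
      split_ifs <;> omega
    rw [Finset.sum_congr rfl this, Finset.sum_const, smul_eq_mul, mul_one]
  omega

/-- Let `w` be a permutation of `{0, …, n-1}`, `r` maximal with `w r > w (r+1)`, `s > r`
maximal with `w s < w r`, and `j < r`.  Then `w t_{rs} t_{rj}` has the same length as `w`
iff `w j < w s` and there is no `j'` with `j < j' < r` and `w j < w j' < w s`. -/
theorem stmt6 (n : ℕ) (w : Equiv.Perm ℕ) (r s j : ℕ)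
    (hfix : ∀ i, n ≤ i → w i = i)
    (hdesc : w (r + 1) < w r)
    (hrmax : ∀ i, r < i → ¬ w (i + 1) < w i)
    (hrs : r < s) (hws : w s < w r)
    (hsmax : ∀ i, s < i → ¬ w i < w r)
    (hj : j < r) :
    lenN (w * Equiv.swap r s * Equiv.swap r j) = lenN w ↔
      (w j < w s ∧ ¬ ∃ j', j < j' ∧ j' < r ∧ w j < w j' ∧ w j' < w s) := by
  have hrn : r < n := by
    by_contra h
    push_neg at h
    have h1 := hfix r h
    have h2 := hfix (r + 1) (by omega)
    omega
  have hwrn : w r < n := fix_lt hfix hrn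
  have hsn : s < n := by
    by_contra h
    push_neg at h
    have h1 := hfix s h
    omega
  have hjr : j ≠ r := by omega
  have hjs : j ≠ s := by omega
  -- monotone after r
  have step : ∀ i, r < i → w i < w (i + 1) := by
    intro i hi
    have h1 := hrmax i hi
    have h2 : w (i + 1) ≠ w i := fun h => by
      have := w.injective h; omega
    omega
  have hmono : ∀ i k, r < i → i < k → w i < w k := by
    intro i k hi hik
    induction k with
    | zero => omega
    | succ k ih =>
      rcases Nat.lt_succ_iff_lt_or_eq.mp hik with h | h
      · exact lt_trans (ih h) (step k (by omega))
      · subst h; exact step i hi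
  have huapp : ∀ x, (w * Equiv.swap r s) x = w (Equiv.swap r s x) := fun x => rfl
  have hufix : ∀ i, n ≤ i → (w * Equiv.swap r s) i = i := by
    intro i hi
    rw [huapp, Equiv.swap_apply_of_ne_of_ne (by omega) (by omega), hfix i hi]
  have hur : (w * Equiv.swap r s) r = w s := by rw [huapp, Equiv.swap_apply_left]
  have hus : (w * Equiv.swap r s) s = w r := by rw [huapp, Equiv.swap_apply_right]
  have huk : ∀ k, k ≠ r → k ≠ s → (w * Equiv.swap r s) k = w k := by
    intro k h1 h2
    rw [huapp, Equiv.swap_apply_of_ne_of_ne h1 h2]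
  -- step A : lenN w = lenN (w * swap r s) + 1
  have hA := key n (w * Equiv.swap r s) r s hufix hrs hsn (by rw [hur, hus]; exact hws)
  have hus2 : w * Equiv.swap r s * Equiv.swap r s = w := by
    rw [mul_assoc, Equiv.swap_mul_self, mul_one]
  have hempty : ((Finset.Ioo r s).filter fun k =>
      (w * Equiv.swap r s) r < (w * Equiv.swap r s) k ∧
        (w * Equiv.swap r s) k < (w * Equiv.swap r s) s) = ∅ := by
    rw [Finset.filter_eq_empty_iff]
    intro k hk
    rw [Finset.mem_Ioo] at hk
    rw [hur, huk k (by omega) (by omega)]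
    have := hmono k s (by omega) (by omega)
    omega
  rw [hus2, hempty] at hA
  simp only [Finset.card_empty, mul_zero, add_zero] at hA
  -- case split
  by_cases hcase : w j < w s
  · have huj : (w * Equiv.swap r s) j = w j := huk j hjr hjs
    have hB := key n (w * Equiv.swap r s) j r hufix hj hrn (by rw [huj, hur]; exact hcase)
    have hswap : Equiv.swap j r = Equiv.swap r j := Equiv.swap_comm j r
    rw [hswap] at hB
    have hfilt : ((Finset.Ioo j r).filter fun k =>
        (w * Equiv.swap r s) j < (w * Equiv.swap r s) k ∧
          (w * Equiv.swap r s) k < (w * Equiv.swap r s) r)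
        = (Finset.Ioo j r).filter fun k => w j < w k ∧ w k < w s := by
      apply Finset.filter_congr
      intro k hk
      rw [Finset.mem_Ioo] at hk
      rw [huj, hur, huk k (by omega) (by omega)]
    rw [hfilt] at hB
    constructor
    · intro h
      refine ⟨hcase, ?_⟩
      rintro ⟨j', h1, h2, h3, h4⟩
      have hmem : j' ∈ (Finset.Ioo j r).filter fun k => w j < w k ∧ w k < w s := by
        simp only [Finset.mem_filter, Finset.mem_Ioo]
        exact ⟨⟨h1, h2⟩, h3, h4⟩
      have := Finset.card_pos.mpr ⟨j', hmem⟩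
      omega
    · rintro ⟨-, hne⟩
      have hz : ((Finset.Ioo j r).filter fun k => w j < w k ∧ w k < w s) = ∅ := by
        rw [Finset.filter_eq_empty_iff]
        intro k hk hcond
        rw [Finset.mem_Ioo] at hk
        exact hne ⟨k, hk.1, hk.2, hcond.1, hcond.2⟩
      rw [hz] at hB
      simp only [Finset.card_empty, mul_zero, add_zero] at hB
      omega
  · -- w s < w j, both sides false
    have hwne : w j ≠ w s := fun h => absurd (w.injective h) hjs
    have hsj : w s < w j := by omega
    constructor
    · intro h
      exfalso
      have hu2app : ∀ x, (w * Equiv.swap r s * Equiv.swap r j) x =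
          (w * Equiv.swap r s) (Equiv.swap r j x) := fun x => rfl
      have hu2fix : ∀ i, n ≤ i → (w * Equiv.swap r s * Equiv.swap r j) i = i := by
        intro i hi
        rw [hu2app, Equiv.swap_apply_of_ne_of_ne (by omega) (by omega), hufix i hi]
      have hu2j : (w * Equiv.swap r s * Equiv.swap r j) j = w s := by
        rw [hu2app, Equiv.swap_apply_right, hur]
      have hu2r : (w * Equiv.swap r s * Equiv.swap r j) r = w j := by
        rw [hu2app, Equiv.swap_apply_left, huk j hjr hjs]
      have hC := key n (w * Equiv.swap r s * Equiv.swap r j) j r hu2fix hj hrn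
        (by rw [hu2j, hu2r]; exact hsj)
      have he : w * Equiv.swap r s * Equiv.swap r j * Equiv.swap j r = w * Equiv.swap r s := by
        rw [Equiv.swap_comm j r, mul_assoc (w * Equiv.swap r s), Equiv.swap_mul_self, mul_one]
      rw [he] at hC
      omega
    · rintro ⟨h, -⟩
      omega
end

section
/- Let w be a permutation with transitions v^1, ..., v^p given by v^i = w·t_{rs}·t_{r,j_i} with j_1 > ... > j_p. Then w(j_1) < w(j_2) < ... < w(j_p) < w(s) < w(r), i.e., the subsequence w(j_p)···w(j_1) w(r) w(s) flattens to the pattern p···1 (p+2)(p+1). -/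
/-- Let `w` be a permutation, `r` maximal with `w r > w (r+1)`, `s > r` maximal with
`w s < w r`, and let `j 0 > j 1 > ⋯ > j (p-1)` be the positions of the transitions of `w`
(so each `j i < r` satisfies `w (j i) < w s` with no intermediate value in between).
Then `w (j 0) < w (j 1) < ⋯ < w (j (p-1)) < w s < w r`, i.e. the subsequence
`w (j (p-1)) ⋯ w (j 0) w r w s` flattens to the pattern `p ⋯ 1 (p+2) (p+1)`. -/
theorem stmt7 (n p : ℕ) (w : Equiv.Perm ℕ) (r s : ℕ) (j : Fin p → ℕ)
    (hfix : ∀ i, n ≤ i → w i = i)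
    (hdesc : w (r + 1) < w r)
    (hrmax : ∀ i, r < i → ¬ w (i + 1) < w i)
    (hrs : r < s) (hws : w s < w r)
    (hsmax : ∀ i, s < i → ¬ w i < w r)
    (hja : StrictAnti j)
    (htrans : ∀ i : Fin p, j i < r ∧ w (j i) < w s ∧
      ¬ ∃ x, j i < x ∧ x < r ∧ w (j i) < w x ∧ w x < w s) :
    StrictMono (fun i : Fin p => w (j i)) ∧ (∀ i : Fin p, w (j i) < w s) ∧ w s < w r := by
  refine ⟨?_, fun i => (htrans i).2.1, hws⟩
  intro a b hab
  simp only
  obtain ⟨hbr, hbs, -⟩ := htrans b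
  obtain ⟨har, has, hno⟩ := htrans a
  have hj : j b < j a := hja hab
  rcases lt_trichotomy (w (j a)) (w (j b)) with h | h | h
  · exact h
  · exact absurd (w.injective h) (Nat.ne_of_lt hj).symm
  · exact absurd ⟨j a, hj, har, h, has⟩ (htrans b).2.2
end

section
/- The bipartite graph of the Rothe diagram D(w) is a forest if and only if w avoids the patterns 3412, 4312, 3421, and 4321. -/
/-!
The four patterns are exactly the configurations `x₁ < x₂ < x₃ < x₄` with `w x₃, w x₄` both
below `w x₁, w x₂`. Such a configuration puts the four cells `(xᵢ, w xⱼ)`, `i ∈ {1, 2}`,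
`j ∈ {3, 4}`, into `D(w)`: a 4-cycle. Conversely, on a cycle take the largest row `i`; its two
cycle-neighbours are columns `p < q`, and the other cycle-neighbour of `q` is a row `b < i`.
Then `b < i < w⁻¹ p, w⁻¹ q` with `p, q < w b, w i` is such a configuration.
-/

/-- The Rothe diagram of `w`: `(a, b) ∈ D(w)` iff `b = w j` for some `j > a` with `w j < w a`. -/
def Rothe {n : ℕ} (w : Equiv.Perm (Fin n)) (c : Fin n × Fin n) : Prop :=
  ∃ j : Fin n, c.1 < j ∧ w j < w c.1 ∧ c.2 = w j

/-- The bipartite graph of a diagram `D ⊆ α × β`: vertices are rows (`Sum.inl`) and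
columns (`Sum.inr`), with an edge joining row `i` to column `j` for each cell `(i,j) ∈ D`. -/
def diagGraph {α β : Type*} (D : Set (α × β)) : SimpleGraph (α ⊕ β) where
  Adj a b := ∃ i j, (i, j) ∈ D ∧
    ((a = Sum.inl i ∧ b = Sum.inr j) ∨ (a = Sum.inr j ∧ b = Sum.inl i))
  symm := by
    constructor
    rintro a b ⟨i, j, hij, h | h⟩
    · exact ⟨i, j, hij, Or.inr ⟨h.2, h.1⟩⟩
    · exact ⟨i, j, hij, Or.inl ⟨h.2, h.1⟩⟩
  loopless := by
    constructor
    rintro a ⟨i, j, hij, ⟨h1, h2⟩ | ⟨h1, h2⟩⟩ <;> rw [h1] at h2 <;> simp at h2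

/-- `w` contains the pattern `v` (on `k` letters). -/
def Contains {n k : ℕ} (w : Equiv.Perm (Fin n)) (v : Fin k → Fin k) : Prop :=
  ∃ f : Fin k → Fin n, StrictMono f ∧ ∀ a b, v a < v b ↔ w (f a) < w (f b)

open SimpleGraph

section DiagGraph

variable {α β : Type*} {D : Set (α × β)}

@[simp]
lemma diagGraph_adj_inl_inr {i : α} {j : β} :
    (diagGraph D).Adj (.inl i) (.inr j) ↔ (i, j) ∈ D := by
  simp [diagGraph]

@[simp]
lemma diagGraph_adj_inr_inl {i : α} {j : β} :
    (diagGraph D).Adj (.inr j) (.inl i) ↔ (i, j) ∈ D := by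
  rw [adj_comm, diagGraph_adj_inl_inr]

@[simp]
lemma not_diagGraph_adj_inl_inl {i i' : α} : ¬ (diagGraph D).Adj (.inl i) (.inl i') := by
  simp [diagGraph]

@[simp]
lemma not_diagGraph_adj_inr_inr {j j' : β} : ¬ (diagGraph D).Adj (.inr j) (.inr j') := by
  simp [diagGraph]

lemma not_isAcyclic_diagGraph_of_rect {i i' : α} {j j' : β} (hi : i ≠ i') (hj : j ≠ j')
    (hij : (i, j) ∈ D) (hij' : (i, j') ∈ D) (hi'j : (i', j) ∈ D) (hi'j' : (i', j') ∈ D) :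
    ¬ (diagGraph D).IsAcyclic := by
  intro hac
  apply hac (Walk.cons (diagGraph_adj_inl_inr.mpr hij) <| .cons (diagGraph_adj_inr_inl.mpr hi'j) <|
    .cons (diagGraph_adj_inl_inr.mpr hi'j') <| .cons (diagGraph_adj_inr_inl.mpr hij') .nil)
  simp [Walk.cons_isCycle_iff, Walk.isPath_def, hi, hj, hi.symm]

lemma exists_rect_of_not_isAcyclic_diagGraph [LinearOrder α] (h : ¬ (diagGraph D).IsAcyclic) :
    ∃ i a b p q, p ≠ q ∧ a < i ∧ b < i ∧
      (i, p) ∈ D ∧ (i, q) ∈ D ∧ (a, p) ∈ D ∧ (b, q) ∈ D := by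
  obtain ⟨v, c, hc⟩ : ∃ v, ∃ c : (diagGraph D).Walk v v, c.IsCycle := by
    simpa only [IsAcyclic, not_forall, not_not] using h
  set H := c.toSubgraph
  have two_nbrs : ∀ x ∈ c.support, (H.neighborSet x).ncard = 2 :=
    fun x hx => hc.ncard_neighborSet_toSubgraph_eq_two hx
  have mem_of_adj : ∀ {x y}, H.Adj x y → y ∈ c.support :=
    fun hxy => c.mem_verts_toSubgraph.mp (H.edge_vert hxy.symm)
  have rows_nonempty : {r : α | .inl r ∈ c.support}.Nonempty := by
    obtain ⟨z, hz⟩ := Set.nonempty_of_ncard_ne_zero (s := H.neighborSet v)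
      (by rw [two_nbrs v c.start_mem_support]; norm_num)
    rcases v with r | p
    · exact ⟨r, c.start_mem_support⟩
    rcases z with a | q
    · exact ⟨a, mem_of_adj hz⟩
    · exact absurd (H.adj_sub hz) not_diagGraph_adj_inr_inr
  have rows_finite : {r : α | .inl r ∈ c.support}.Finite :=
    c.support.finite_toSet.preimage Sum.inl_injective.injOn
  obtain ⟨i, hi, hmax⟩ := Set.exists_max_image _ id rows_finite rows_nonempty
  have lower_row : ∀ {p}, H.Adj (.inl i) (.inr p) → ∃ a < i, (a, p) ∈ D := by
    intro p hp
    obtain ⟨z, hz, hzi⟩ := Set.exists_ne_of_one_lt_ncard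
      (by rw [two_nbrs _ (mem_of_adj hp)]; norm_num) (Sum.inl i : α ⊕ β)
    rcases z with a | q
    · refine ⟨a, (hmax a (mem_of_adj hz)).lt_of_ne fun hai => hzi (congrArg Sum.inl hai), ?_⟩
      simpa using H.adj_sub hz
    · exact absurd (H.adj_sub hz) not_diagGraph_adj_inr_inr
  obtain ⟨x, y, hxy, hnbrs⟩ := Set.ncard_eq_two.mp (two_nbrs _ hi)
  have hx : H.Adj (.inl i) x := by simp [← Subgraph.mem_neighborSet, hnbrs]
  have hy : H.Adj (.inl i) y := by simp [← Subgraph.mem_neighborSet, hnbrs]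
  rcases x with _ | p
  · exact absurd (H.adj_sub hx) not_diagGraph_adj_inl_inl
  rcases y with _ | q
  · exact absurd (H.adj_sub hy) not_diagGraph_adj_inl_inl
  obtain ⟨a, ha, hap⟩ := lower_row hx
  obtain ⟨b, hb, hbq⟩ := lower_row hy
  exact ⟨i, a, b, p, q, fun h => hxy (h ▸ rfl), ha, hb, by simpa using H.adj_sub hx,
    by simpa using H.adj_sub hy, hap, hbq⟩

end DiagGraph

section Rothe

variable {n : ℕ} (w : Equiv.Perm (Fin n))

lemma rothe_iff {i c : Fin n} : Rothe w (i, c) ↔ c < w i ∧ i < w.symm c := by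
  constructor
  · rintro ⟨j, hij, hwj, rfl⟩
    simpa using ⟨hwj, hij⟩
  · rintro ⟨hc, hi⟩
    exact ⟨w.symm c, hi, by simpa using hc, by simp⟩

/-- An occurrence of one of `3412`, `4312`, `3421`, `4321`; which one depends on the relative
order within each of the pairs `x₁, x₂` and `x₃, x₄`. -/
def ContainsHighLow : Prop :=
  ∃ x₁ x₂ x₃ x₄ : Fin n, x₁ < x₂ ∧ x₂ < x₃ ∧ x₃ < x₄ ∧ max (w x₃) (w x₄) < min (w x₁) (w x₂)

lemma containsHighLow_iff :
    ContainsHighLow w ↔ Contains w ![2, 3, 0, 1] ∨ Contains w ![3, 2, 0, 1] ∨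
      Contains w ![2, 3, 1, 0] ∨ Contains w ![3, 2, 1, 0] := by
  constructor
  · rintro ⟨x₁, x₂, x₃, x₄, h₁₂, h₂₃, h₃₄, hlow⟩
    simp only [max_lt_iff, lt_min_iff] at hlow
    have hmono : StrictMono ![x₁, x₂, x₃, x₄] := by
      intro a b hab
      fin_cases a <;> fin_cases b <;> simp at hab ⊢ <;> order
    rcases (w.injective.ne h₁₂.ne).lt_or_gt with h | h <;>
      rcases (w.injective.ne h₃₄.ne).lt_or_gt with h' | h' <;>
      [refine .inl ⟨_, hmono, ?_⟩; refine .inr <| .inr <| .inl ⟨_, hmono, ?_⟩;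
        refine .inr <| .inl ⟨_, hmono, ?_⟩; refine .inr <| .inr <| .inr ⟨_, hmono, ?_⟩] <;>
    · intro a b
      fin_cases a <;> fin_cases b <;> simp <;> order
  · rintro (⟨f, hf, hv⟩ | ⟨f, hf, hv⟩ | ⟨f, hf, hv⟩ | ⟨f, hf, hv⟩) <;>
    · refine ⟨f 0, f 1, f 2, f 3, hf (by decide), hf (by decide), hf (by decide), ?_⟩
      simp only [max_lt_iff, lt_min_iff, ← hv]
      decide

variable {w}

lemma containsHighLow_of_lt {x₁ x₂ y y' : Fin n} (h₁₂ : x₁ < x₂) (h₂y : x₂ < y) (h₂y' : x₂ < y')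
    (hyy' : y ≠ y') (hlow : max (w y) (w y') < min (w x₁) (w x₂)) : ContainsHighLow w := by
  rcases hyy'.lt_or_gt with h | h
  · exact ⟨x₁, x₂, y, y', h₁₂, h₂y, h, hlow⟩
  · exact ⟨x₁, x₂, y', y, h₁₂, h₂y', h, max_comm (w y) (w y') ▸ hlow⟩

lemma containsHighLow_of_rothe_rect {i a b p q : Fin n} (hpq : p ≠ q) (ha : a < i) (hb : b < i)
    (hip : Rothe w (i, p)) (hiq : Rothe w (i, q)) (hap : Rothe w (a, p)) (hbq : Rothe w (b, q)) :
    ContainsHighLow w := by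
  wlog hlt : p < q generalizing a b p q
  · exact this hpq.symm hb ha hiq hip hbq hap (hpq.symm.lt_of_le (not_lt.mp hlt))
  rw [rothe_iff] at hip hiq hbq
  refine containsHighLow_of_lt hb hip.2 hiq.2 (w.symm.injective.ne hpq) ?_
  simp only [Equiv.apply_symm_apply, max_lt_iff, lt_min_iff]
  exact ⟨⟨hlt.trans hbq.1, hbq.1⟩, hip.1, hiq.1⟩

lemma not_isAcyclic_of_containsHighLow (h : ContainsHighLow w) :
    ¬ (diagGraph {c : Fin n × Fin n | Rothe w c}).IsAcyclic := by
  obtain ⟨x₁, x₂, x₃, x₄, h₁₂, h₂₃, h₃₄, hlow⟩ := h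
  simp only [max_lt_iff, lt_min_iff] at hlow
  exact not_isAcyclic_diagGraph_of_rect h₁₂.ne (w.injective.ne h₃₄.ne)
    ⟨x₃, h₁₂.trans h₂₃, hlow.1.1, rfl⟩ ⟨x₄, (h₁₂.trans h₂₃).trans h₃₄, hlow.1.2, rfl⟩
    ⟨x₃, h₂₃, hlow.2.1, rfl⟩ ⟨x₄, h₂₃.trans h₃₄, hlow.2.2, rfl⟩

lemma isAcyclic_diagGraph_rothe_iff :
    (diagGraph {c : Fin n × Fin n | Rothe w c}).IsAcyclic ↔ ¬ ContainsHighLow w := by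
  refine ⟨fun hac h => not_isAcyclic_of_containsHighLow h hac, fun h => ?_⟩
  by_contra hcyc
  obtain ⟨i, a, b, p, q, hpq, ha, hb, hip, hiq, hap, hbq⟩ :=
    exists_rect_of_not_isAcyclic_diagGraph hcyc
  exact h (containsHighLow_of_rothe_rect hpq ha hb hip hiq hap hbq)

end Rothe

/-- The bipartite graph of the Rothe diagram `D(w)` is a forest iff `w` avoids the
patterns `3412`, `4312`, `3421` and `4321` (written zero-based below). -/
theorem stmt10 {n : ℕ} (w : Equiv.Perm (Fin n)) :
    (diagGraph {c : Fin n × Fin n | Rothe w c}).IsAcyclic ↔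
      (¬ Contains w ![2, 3, 0, 1] ∧ ¬ Contains w ![3, 2, 0, 1] ∧
        ¬ Contains w ![2, 3, 1, 0] ∧ ¬ Contains w ![3, 2, 1, 0]) := by
  rw [isAcyclic_diagGraph_rothe_iff, containsHighLow_iff]
  tauto
end

section
/- If the bipartite graph of the Rothe diagram of w contains a cycle, then w contains one of the patterns 3412, 4312, 3421, 4321; in particular, any northwest diagram whose bipartite graph contains a cycle contains a full 2×2 square {(p,x),(p,y),(q,x),(q,y)} with p<q, x<y as a subset. -/
/-!
Take a cycle in the bipartite graph of `D` and let `q` be the largest row it visits. The cycle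
leaves `q` through two columns `x < y`, and leaves `y` through two rows, one of which is some
`p ≠ q`, hence `p < q`. The three cells `(q, x), (q, y), (p, y)` complete to a `2 × 2` square
when `D` is northwest. For a Rothe diagram the cells `(q, x), (q, y)` are `x = w i, y = w j` with
`i, j > q`, and `(p, y)` gives `w j < w p`; so the values at `i, j` lie below those at `p < q`,
which is one of the four patterns according to how each pair is ordered.
-/

open SimpleGraph

theorem SimpleGraph.Walk.IsCycle.exists_adj_ne_of_mem_support {V : Type*} [DecidableEq V]
    {G : SimpleGraph V} {v u : V} {c : G.Walk v v} (hc : c.IsCycle) (hu : u ∈ c.support) :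
    ∃ a b, a ≠ b ∧ G.Adj u a ∧ G.Adj u b ∧ a ∈ c.support ∧ b ∈ c.support := by
  have hc' := hc.rotate hu
  refine ⟨_, _, hc'.snd_ne_penultimate, Walk.adj_snd hc'.not_nil,
    (Walk.adj_penultimate hc'.not_nil).symm, ?_, ?_⟩ <;>
  exact (c.mem_support_rotate_iff u hu).1 (Walk.getVert_mem_support _ _)

namespace diagGraph

variable {α β : Type*} {D : Set (α × β)}

theorem adj_inl_iff {i : α} {X : α ⊕ β} :
    (diagGraph D).Adj (Sum.inl i) X ↔ ∃ j, X = Sum.inr j ∧ (i, j) ∈ D := by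
  constructor
  · rintro ⟨i', j, hD, ⟨hi, rfl⟩ | ⟨hi, -⟩⟩
    · exact ⟨j, rfl, Sum.inl_injective hi ▸ hD⟩
    · cases hi
  · rintro ⟨j, rfl, hD⟩
    exact ⟨i, j, hD, Or.inl ⟨rfl, rfl⟩⟩

theorem adj_inr_iff {j : β} {X : α ⊕ β} :
    (diagGraph D).Adj (Sum.inr j) X ↔ ∃ i, X = Sum.inl i ∧ (i, j) ∈ D := by
  rw [adj_comm]
  constructor
  · rintro ⟨i, j', hD, ⟨rfl, hj⟩ | ⟨-, hj⟩⟩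
    · exact ⟨i, rfl, Sum.inr_injective hj ▸ hD⟩
    · cases hj
  · rintro ⟨i, rfl, hD⟩
    exact ⟨i, j, hD, Or.inl ⟨rfl, rfl⟩⟩

section Cycle

variable [DecidableEq α] [DecidableEq β] {v : α ⊕ β} {c : (diagGraph D).Walk v v}

theorem exists_ne_cols_of_mem_support (hc : c.IsCycle) {i : α} (hi : Sum.inl i ∈ c.support) :
    ∃ x y, x ≠ y ∧ (i, x) ∈ D ∧ (i, y) ∈ D ∧ Sum.inr x ∈ c.support ∧ Sum.inr y ∈ c.support := by
  obtain ⟨X, Y, hXY, hX, hY, hXc, hYc⟩ := hc.exists_adj_ne_of_mem_support hi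
  obtain ⟨x, rfl, hx⟩ := adj_inl_iff.1 hX
  obtain ⟨y, rfl, hy⟩ := adj_inl_iff.1 hY
  exact ⟨x, y, fun h => hXY (h ▸ rfl), hx, hy, hXc, hYc⟩

theorem exists_ne_rows_of_mem_support (hc : c.IsCycle) {j : β} (hj : Sum.inr j ∈ c.support) :
    ∃ p q, p ≠ q ∧ (p, j) ∈ D ∧ (q, j) ∈ D ∧ Sum.inl p ∈ c.support ∧ Sum.inl q ∈ c.support := by
  obtain ⟨X, Y, hXY, hX, hY, hXc, hYc⟩ := hc.exists_adj_ne_of_mem_support hj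
  obtain ⟨p, rfl, hp⟩ := adj_inr_iff.1 hX
  obtain ⟨q, rfl, hq⟩ := adj_inr_iff.1 hY
  exact ⟨p, q, fun h => hXY (h ▸ rfl), hp, hq, hXc, hYc⟩

end Cycle

variable [LinearOrder α] [LinearOrder β]

theorem exists_corner_of_not_isAcyclic (h : ¬(diagGraph D).IsAcyclic) :
    ∃ p q x y, p < q ∧ x < y ∧ (q, x) ∈ D ∧ (q, y) ∈ D ∧ (p, y) ∈ D := by
  simp only [IsAcyclic, not_forall, not_not] at h
  obtain ⟨v, c, hc⟩ := h
  let height : α ⊕ β → WithBot α := Sum.elim (↑) fun _ => ⊥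
  obtain ⟨z, hz, hmax⟩ := c.support.toFinset.exists_max_image height ⟨v, by simp⟩
  simp only [List.mem_toFinset] at hz hmax
  obtain ⟨q, rfl⟩ : ∃ q, z = Sum.inl q := by
    rcases z with q | j
    · exact ⟨q, rfl⟩
    · obtain ⟨p, -, -, -, -, hp, -⟩ := exists_ne_rows_of_mem_support hc hz
      exact absurd (hmax _ hp) (by simp [height])
  have hle : ∀ p, Sum.inl p ∈ c.support → p ≤ q := fun p hp => WithBot.coe_le_coe.1 (hmax _ hp)
  obtain ⟨x₁, x₂, hne, hx₁, hx₂, hx₁c, hx₂c⟩ := exists_ne_cols_of_mem_support hc hz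
  wlog hlt : x₁ < x₂ generalizing x₁ x₂
  · exact this x₂ x₁ hne.symm hx₂ hx₁ hx₂c hx₁c (hne.symm.lt_of_le (not_lt.1 hlt))
  obtain ⟨p₁, p₂, hp, hp₁, hp₂, hp₁c, hp₂c⟩ := exists_ne_rows_of_mem_support hc hx₂c
  obtain ⟨p, hpq, hpy, hpc⟩ : ∃ p, p ≠ q ∧ (p, x₂) ∈ D ∧ Sum.inl p ∈ c.support := by
    by_cases h : p₁ = q
    · exact ⟨p₂, fun h' => hp (h.trans h'.symm), hp₂, hp₂c⟩
    · exact ⟨p₁, h, hp₁, hp₁c⟩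
  exact ⟨p, q, x₁, x₂, (hle p hpc).lt_of_ne hpq, hlt, hx₁, hx₂, hpy⟩

theorem exists_square_of_not_isAcyclic
    (hNW : ∀ a b c d, (a, d) ∈ D → (c, b) ∈ D → a < c → b < d → (a, b) ∈ D)
    (h : ¬(diagGraph D).IsAcyclic) :
    ∃ p q x y, p < q ∧ x < y ∧ (p, x) ∈ D ∧ (p, y) ∈ D ∧ (q, x) ∈ D ∧ (q, y) ∈ D := by
  obtain ⟨p, q, x, y, hpq, hxy, hqx, hqy, hpy⟩ := exists_corner_of_not_isAcyclic h
  exact ⟨p, q, x, y, hpq, hxy, hNW p x q y hpy hqx hpq hxy, hpy, hqx, hqy⟩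

end diagGraph

section Patterns

variable {n k : ℕ} (w : Equiv.Perm (Fin n))

/-- `g` lists the values of `w ∘ f` in increasing order, and `v i` is the rank of `w (f i)`. -/
theorem contains_of_strictMono {v : Fin k → Fin k} {f g : Fin k → Fin n} (hf : StrictMono f)
    (hg : StrictMono g) (hgv : ∀ i, g (v i) = w (f i)) : Contains w v :=
  ⟨f, hf, fun a b => by rw [← hgv, ← hgv, hg.lt_iff_lt]⟩

theorem contains_pattern_of_lt {a b c d : Fin n} (hab : a < b) (hbc : b < c) (hcd : c < d)
    (hca : w c < w a) (hcb : w c < w b) (hda : w d < w a) (hdb : w d < w b) :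
    Contains w ![2, 3, 0, 1] ∨ Contains w ![3, 2, 0, 1] ∨
      Contains w ![2, 3, 1, 0] ∨ Contains w ![3, 2, 1, 0] := by
  have hf : StrictMono ![a, b, c, d] := by simp [strictMono_vecCons, hab, hbc, hcd]
  rcases lt_or_gt_of_ne (w.injective.ne hab.ne) with hwab | hwab <;>
    rcases lt_or_gt_of_ne (w.injective.ne hcd.ne) with hwcd | hwcd
  · refine .inl (contains_of_strictMono w (g := ![w c, w d, w a, w b]) hf ?_ ?_)
    · simp [strictMono_vecCons, hwcd, hda, hwab]
    · intro i; fin_cases i <;> rfl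
  · refine .inr (.inr (.inl (contains_of_strictMono w (g := ![w d, w c, w a, w b]) hf ?_ ?_)))
    · simp [strictMono_vecCons, hwcd, hca, hwab]
    · intro i; fin_cases i <;> rfl
  · refine .inr (.inl (contains_of_strictMono w (g := ![w c, w d, w b, w a]) hf ?_ ?_))
    · simp [strictMono_vecCons, hwcd, hdb, hwab]
    · intro i; fin_cases i <;> rfl
  · refine .inr (.inr (.inr (contains_of_strictMono w (g := ![w d, w c, w b, w a]) hf ?_ ?_)))
    · simp [strictMono_vecCons, hwcd, hcb, hwab]
    · intro i; fin_cases i <;> rfl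

theorem Rothe.contains_pattern_of_corner {p q x y : Fin n} (hpq : p < q) (hxy : x < y)
    (hqx : Rothe w (q, x)) (hqy : Rothe w (q, y)) (hpy : Rothe w (p, y)) :
    Contains w ![2, 3, 0, 1] ∨ Contains w ![3, 2, 0, 1] ∨
      Contains w ![2, 3, 1, 0] ∨ Contains w ![3, 2, 1, 0] := by
  obtain ⟨i, hqi, hiq, rfl⟩ := hqx
  obtain ⟨j, hqj, hjq, rfl⟩ := hqy
  obtain ⟨k, -, hkp, hjk : w j = w k⟩ := hpy
  have hjp : w j < w p := hjk ▸ hkp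
  have hip : w i < w p := hxy.trans hjp
  rcases lt_or_gt_of_ne (w.injective.ne_iff.1 hxy.ne) with hij | hji
  · exact contains_pattern_of_lt w hpq hqi hij hip hiq hjp hjq
  · exact contains_pattern_of_lt w hpq hqj hji hjp hjq hip hiq

end Patterns

theorem stmt11_general {n : ℕ} (w : Equiv.Perm (Fin n)) (D : Set (ℕ × ℕ))
    (hNW : ∀ a b c d : ℕ, (a, d) ∈ D → (c, b) ∈ D → a < c → b < d → (a, b) ∈ D) :
    (¬ (diagGraph {c : Fin n × Fin n | Rothe w c}).IsAcyclic →
      (Contains w ![2, 3, 0, 1] ∨ Contains w ![3, 2, 0, 1] ∨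
        Contains w ![2, 3, 1, 0] ∨ Contains w ![3, 2, 1, 0])) ∧
    (¬ (diagGraph D).IsAcyclic →
      ∃ p q x y : ℕ, p < q ∧ x < y ∧
        (p, x) ∈ D ∧ (p, y) ∈ D ∧ (q, x) ∈ D ∧ (q, y) ∈ D) := by
  refine ⟨fun h => ?_, diagGraph.exists_square_of_not_isAcyclic hNW⟩
  obtain ⟨p, q, x, y, hpq, hxy, hqx, hqy, hpy⟩ := diagGraph.exists_corner_of_not_isAcyclic h
  exact Rothe.contains_pattern_of_corner w hpq hxy hqx hqy hpy

/-- If the bipartite graph of the Rothe diagram of `w` contains a cycle, then `w` contains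
one of the patterns `3412`, `4312`, `3421`, `4321`; in particular, any (finite) northwest
diagram whose bipartite graph contains a cycle contains a full 2×2 square. -/
theorem stmt11 {n : ℕ} (w : Equiv.Perm (Fin n)) (D : Set (ℕ × ℕ)) (hD : D.Finite)
    (hNW : ∀ a b c d : ℕ, (a, d) ∈ D → (c, b) ∈ D → a < c → b < d → (a, b) ∈ D) :
    (¬ (diagGraph {c : Fin n × Fin n | Rothe w c}).IsAcyclic →
      (Contains w ![2, 3, 0, 1] ∨ Contains w ![3, 2, 0, 1] ∨
        Contains w ![2, 3, 1, 0] ∨ Contains w ![3, 2, 1, 0])) ∧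
    (¬ (diagGraph D).IsAcyclic →
      ∃ p q x y : ℕ, p < q ∧ x < y ∧
        (p, x) ∈ D ∧ (p, y) ∈ D ∧ (q, x) ∈ D ∧ (q, y) ∈ D) :=
  stmt11_general w D hNW
end
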